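/- arXiv:2512.05916 — 4 statements merged into one kernel-verified Lean document; each statement's English description precedes it below -/
import Mathlib

section
/- Let K, Q ∈ ℝ^{T×d} with T ≥ d and R ≤ d. Let Û_K ∈ ℝ^{T×R} consist of the first R left singular vectors of K and let Û ∈ ℝ^{T×R} consist of the first R left singular vectors of K Qᵀ. Assume the singular value gap σ_R(KQᵀ) > σ_{R+1}(KQᵀ). If ‖K V̂_K V̂_Kᵀ Qᵀ − K Qᵀ‖_F² = Σ_{i=R+1}^{d} σ_i(KQᵀ)² (i.e., K-SVD attains the optimal error), then Û_K Û_Kᵀ K Qᵀ = Û Ûᵀ K Qᵀ; in particular the K-SVD approximation of the attention matrix equals its best rank-R approximation. -/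
open Matrix Finset

set_option maxHeartbeats 2000000

/-- The Frobenius norm of a real matrix. -/
noncomputable def frobNorm {α β : Type*} [Fintype α] [Fintype β]
    (M : Matrix α β ℝ) : ℝ :=
  Real.sqrt (∑ i, ∑ j, (M i j) ^ 2)

/-- `IsSVD M U σ V` states that `M = U * diag(σ₁, …, σ_r) * Vᵀ` is a singular value
decomposition of `M` with inner dimension `r`: `U` and `V` have orthonormal columns and
the singular values `σ₁ ≥ σ₂ ≥ … ≥ σ_r ≥ 0` are given 1-indexed by `σ : ℕ → ℝ`,
padded with zeros beyond index `r` (and with the irrelevant value `σ 0` unconstrained). -/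
structure IsSVD {α β : Type*} [Fintype α] [Fintype β] {r : ℕ}
    (M : Matrix α β ℝ) (U : Matrix α (Fin r) ℝ) (σ : ℕ → ℝ)
    (V : Matrix β (Fin r) ℝ) : Prop where
  factorization : M = U * Matrix.diagonal (fun i : Fin r => σ ((i : ℕ) + 1)) * Vᵀ
  leftOrtho : Uᵀ * U = 1
  rightOrtho : Vᵀ * V = 1
  antitone : ∀ i j : ℕ, 1 ≤ i → i ≤ j → σ j ≤ σ i
  nonneg : ∀ i : ℕ, 1 ≤ i → 0 ≤ σ i
  padZero : ∀ i : ℕ, r < i → σ i = 0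

/-- The submatrix made of the first `R` columns of a matrix. -/
def firstCols {α : Type*} {q : ℕ} (M : Matrix α (Fin q) ℝ) {R : ℕ} (h : R ≤ q) :
    Matrix α (Fin R) ℝ :=
  M.submatrix id (Fin.castLE h)

/-- The `T × R` embedding matrix. -/
def embed {R T : ℕ} (h : R ≤ T) : Matrix (Fin T) (Fin R) ℝ :=
  fun i j => if i = Fin.castLE h j then 1 else 0

lemma firstCols_eq_mul {α : Type*} [Fintype α] {T R : ℕ} (M : Matrix α (Fin T) ℝ)
    (h : R ≤ T) : firstCols M h = M * embed h := by
  ext i j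
  simp [firstCols, embed, Matrix.mul_apply]

lemma embedT_mul_embed {R T : ℕ} (h : R ≤ T) : (embed h)ᵀ * embed h = 1 := by
  ext a b
  simp only [Matrix.mul_apply, embed, transpose_apply, ite_mul, one_mul, zero_mul,
    Matrix.one_apply]
  rw [Finset.sum_ite_eq' (univ : Finset (Fin T)) (Fin.castLE h a)]
  simp [Fin.castLE_inj, eq_comm]

lemma embed_mul_embedT {R T : ℕ} (h : R ≤ T) :
    embed h * (embed h)ᵀ
      = Matrix.diagonal (fun i : Fin T => if (i : ℕ) < R then 1 else 0) := by
  ext i j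
  simp only [Matrix.mul_apply, embed, transpose_apply, Matrix.diagonal]
  by_cases hi : (i : ℕ) < R
  · rw [Finset.sum_eq_single (⟨(i : ℕ), hi⟩ : Fin R)]
    · have : i = Fin.castLE h ⟨(i : ℕ), hi⟩ := by ext; rfl
      simp only [← this, if_pos rfl, one_mul]
      by_cases hij : i = j
      · subst hij; simp [Matrix.of_apply, hi]
      · simp [Matrix.of_apply, hij, Ne.symm hij]
    · intro k _ hk
      have : ¬ i = Fin.castLE h k := by
        intro hc; apply hk; ext; simpa [Fin.ext_iff] using hc.symm
      simp [this]
    · simp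
  · have hni : ∀ k : Fin R, ¬ i = Fin.castLE h k := by
      intro k hc
      exact hi (hc ▸ k.isLt)
    have hz : ∀ k : Fin R,
        (if i = Fin.castLE h k then (1:ℝ) else 0) * (if j = Fin.castLE h k then 1 else 0) = 0 := by
      intro k; simp [hni k]
    rw [Finset.sum_congr rfl fun k _ => hz k]
    by_cases hij : i = j
    · subst hij; simp [Matrix.of_apply, hi]
    · simp [Matrix.of_apply, hij]

lemma trace_diagonal_mul {T : ℕ} (f : Fin T → ℝ) (M : Matrix (Fin T) (Fin T) ℝ) :
    Matrix.trace (Matrix.diagonal f * M) = ∑ i, f i * M i i := by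
  simp [Matrix.trace, Matrix.diag, Matrix.mul_apply, Matrix.diagonal, ite_mul]

lemma frobNormSq {α β : Type*} [Fintype α] [Fintype β] (M : Matrix α β ℝ) :
    Matrix.trace (M * Mᵀ) = ∑ i, ∑ j, (M i j)^2 := by
  simp [Matrix.trace, Matrix.diag, Matrix.mul_apply, sq]

lemma sum_castLE {R T : ℕ} (hRT : R ≤ T) (f : Fin T → ℝ) :
    ∑ j : Fin R, f (Fin.castLE hRT j)
      = ∑ i ∈ univ.filter (fun i : Fin T => (i : ℕ) < R), f i := by
  rw [← Finset.sum_image (f := f) (g := Fin.castLE hRT)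
    (by intro x _ y _ hxy; exact Fin.castLE_injective hRT hxy)]
  congr 1
  ext i
  simp only [Finset.mem_image, Finset.mem_univ, true_and, Finset.mem_filter]
  constructor
  · rintro ⟨j, hj⟩; rw [← hj]; exact j.isLt
  · intro hi; exact ⟨⟨(i:ℕ), hi⟩, by ext; rfl⟩

lemma sum_filter_ge {R T : ℕ} (f : ℕ → ℝ) :
    ∑ i ∈ univ.filter (fun i : Fin T => ¬ (i : ℕ) < R), f ((i : ℕ) + 1)
      = ∑ n ∈ Finset.Ioc R T, f n := by
  rw [← Finset.sum_image (f := f) (g := fun i : Fin T => (i : ℕ) + 1)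
    (by intro x _ y _ hxy; dsimp only at hxy; exact Fin.val_injective (by omega))]
  congr 1
  ext n
  simp only [Finset.mem_image, Finset.mem_filter, Finset.mem_univ, true_and,
    Finset.mem_Ioc, Fin.exists_iff]
  constructor
  · rintro ⟨a, ha, hna, rfl⟩; omega
  · rintro ⟨h1, h2⟩; exact ⟨n - 1, by omega, by omega, by omega⟩

lemma sum_fin_eq_Ioc {T : ℕ} (f : ℕ → ℝ) :
    ∑ i : Fin T, f ((i : ℕ) + 1) = ∑ n ∈ Finset.Ioc 0 T, f n := by
  have := sum_filter_ge (R := 0) (T := T) f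
  simpa using this

/-- Key commutation: projecting `M` onto the first right-singular directions equals
projecting via the corresponding left-singular directions. -/
lemma proj_comm {α β γ : Type*} [Fintype α] [Fintype β] [Fintype γ] [DecidableEq β]
    (M U : Matrix α β ℝ) (S : β → ℝ) (V : Matrix β β ℝ) (E : Matrix β γ ℝ) (D : β → ℝ)
    (hM : M = U * Matrix.diagonal S * Vᵀ) (hU : Uᵀ * U = 1) (hV : Vᵀ * V = 1)
    (hE : E * Eᵀ = Matrix.diagonal D) :
    M * (V * E) * (V * E)ᵀ = (U * E) * (U * E)ᵀ * M := by
  rw [hM]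
  simp only [Matrix.transpose_mul, Matrix.mul_assoc]
  rw [← Matrix.mul_assoc Vᵀ V, hV, Matrix.one_mul,
      ← Matrix.mul_assoc Uᵀ U, hU, Matrix.one_mul,
      ← Matrix.mul_assoc E Eᵀ Vᵀ,
      ← Matrix.mul_assoc E Eᵀ (Matrix.diagonal S * Vᵀ), hE,
      ← Matrix.mul_assoc (Matrix.diagonal S) (Matrix.diagonal D),
      ← Matrix.mul_assoc (Matrix.diagonal D) (Matrix.diagonal S),
      Matrix.diagonal_mul_diagonal, Matrix.diagonal_mul_diagonal]
  have hc : (fun i => S i * D i) = fun i => D i * S i := by funext i; ring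
  rw [hc]

lemma err_trace {T : ℕ} (A P : Matrix (Fin T) (Fin T) ℝ)
    (hPt : Pᵀ = P) (hP2 : P * P = P) :
    Matrix.trace ((P * A - A) * (P * A - A)ᵀ)
      = Matrix.trace (A * Aᵀ) - Matrix.trace (P * (A * Aᵀ)) := by
  have expand : (P * A - A) * (P * A - A)ᵀ
      = P * (A * Aᵀ) * P - P * (A * Aᵀ) - A * Aᵀ * P + A * Aᵀ := by
    rw [Matrix.transpose_sub, Matrix.transpose_mul, hPt]
    noncomm_ring
  rw [expand, Matrix.trace_add, Matrix.trace_sub, Matrix.trace_sub]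
  have h1 : Matrix.trace (P * (A * Aᵀ) * P) = Matrix.trace (P * (A * Aᵀ)) := by
    rw [Matrix.trace_mul_comm, ← Matrix.mul_assoc, hP2]
  have h2 : Matrix.trace (A * Aᵀ * P) = Matrix.trace (P * (A * Aᵀ)) :=
    Matrix.trace_mul_comm _ _
  rw [h1, h2]; ring

/-- If K-SVD attains the optimal rank-`R` attention approximation error and there is a
gap `σ_R(KQᵀ) > σ_{R+1}(KQᵀ)`, then the projections onto the first `R` left singular
vectors of `K` and of `K Qᵀ` act identically on `K Qᵀ`; in particular the K-SVD
approximation of the attention matrix equals its best rank-`R` approximation. -/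
theorem ksvd_equality_case (T d R : ℕ) (hTd : d ≤ T) (hR : R ≤ d)
    (K Q : Matrix (Fin T) (Fin d) ℝ)
    (UK : Matrix (Fin T) (Fin d) ℝ) (σK : ℕ → ℝ) (VK : Matrix (Fin d) (Fin d) ℝ)
    (hKSVD : IsSVD K UK σK VK)
    (U : Matrix (Fin T) (Fin T) ℝ) (σ : ℕ → ℝ) (V : Matrix (Fin T) (Fin T) ℝ)
    (hSVD : IsSVD (K * Qᵀ) U σ V)
    (hgap : σ R > σ (R + 1))
    (hopt : frobNorm (K * firstCols VK hR * (firstCols VK hR)ᵀ * Qᵀ - K * Qᵀ) ^ 2 =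
      ∑ i ∈ Finset.Icc (R + 1) d, σ i ^ 2) :
    firstCols UK hR * (firstCols UK hR)ᵀ * (K * Qᵀ) =
      firstCols U (hR.trans hTd) * (firstCols U (hR.trans hTd))ᵀ * (K * Qᵀ) := by
  rcases Nat.eq_zero_or_pos R with hR0 | hRpos
  · subst hR0
    ext i j
    simp [Matrix.mul_apply, firstCols]
  have hTR : R ≤ T := hR.trans hTd
  have hUUt : U * Uᵀ = 1 := mul_eq_one_comm.mp hSVD.leftOrtho
  -- the K-SVD projector
  set W : Matrix (Fin T) (Fin R) ℝ := UK * embed hR with hWdef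
  have hWtW : Wᵀ * W = 1 := by
    rw [hWdef, Matrix.transpose_mul, Matrix.mul_assoc, ← Matrix.mul_assoc UKᵀ UK,
      hKSVD.leftOrtho, Matrix.one_mul, embedT_mul_embed]
  -- step B : the projection identity for the K-SVD
  have hB : K * firstCols VK hR * (firstCols VK hR)ᵀ * Qᵀ = W * Wᵀ * (K * Qᵀ) := by
    rw [firstCols_eq_mul VK hR]
    have hcomm := proj_comm K UK (fun i : Fin d => σK ((i : ℕ) + 1)) VK (embed hR)
      (fun i : Fin d => if (i : ℕ) < R then 1 else 0) hKSVD.factorization hKSVD.leftOrtho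
      hKSVD.rightOrtho (embed_mul_embedT hR)
    rw [hcomm, ← hWdef, Matrix.mul_assoc]
  -- translate the optimality hypothesis into traces
  have hfrob : ∀ (N : Matrix (Fin T) (Fin T) ℝ), frobNorm N ^ 2 = Matrix.trace (N * Nᵀ) := by
    intro N
    rw [frobNormSq, frobNorm, Real.sq_sqrt (by positivity)]
  have hWWt2 : (W * Wᵀ) * (W * Wᵀ) = W * Wᵀ := by
    rw [Matrix.mul_assoc, ← Matrix.mul_assoc Wᵀ W, hWtW, Matrix.one_mul]
  have hWWtt : (W * Wᵀ)ᵀ = W * Wᵀ := by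
    rw [Matrix.transpose_mul, Matrix.transpose_transpose]
  rw [hB, hfrob, err_trace (K * Qᵀ) (W * Wᵀ) hWWtt hWWt2, Finset.Icc_add_one_left_eq_Ioc] at hopt
  -- singular values squared
  set s2 : Fin T → ℝ := fun i => σ ((i : ℕ) + 1) ^ 2 with hs2
  have hAAt : K * Qᵀ * (K * Qᵀ)ᵀ = U * Matrix.diagonal s2 * Uᵀ := by
    rw [hSVD.factorization]
    simp only [Matrix.transpose_mul, Matrix.transpose_transpose,
      Matrix.diagonal_transpose, Matrix.mul_assoc]
    rw [← Matrix.mul_assoc Vᵀ V, hSVD.rightOrtho, Matrix.one_mul,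
      ← Matrix.mul_assoc (Matrix.diagonal _) (Matrix.diagonal _),
      Matrix.diagonal_mul_diagonal]
    have hfg : ∀ f g : Fin T → ℝ, f = g →
        U * (Matrix.diagonal f * Uᵀ) = U * (Matrix.diagonal g * Uᵀ) := by
      intro f g hfg; rw [hfg]
    apply hfg
    funext i
    rw [hs2]
    dsimp only
    rw [Nat.add_comm]
    ring
  have htr1 : Matrix.trace (K * Qᵀ * (K * Qᵀ)ᵀ) = ∑ i, s2 i := by
    rw [hAAt, Matrix.trace_mul_comm (U * Matrix.diagonal s2) Uᵀ, ← Matrix.mul_assoc,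
      hSVD.leftOrtho, Matrix.one_mul, Matrix.trace_diagonal]
  -- the matrix C and leverage scores h
  set C : Matrix (Fin T) (Fin R) ℝ := Uᵀ * W with hCdef
  set h : Fin T → ℝ := fun i => ∑ j, (C i j) ^ 2 with hh
  have hCCt_diag : ∀ i, (C * Cᵀ) i i = h i := by
    intro i
    simp [Matrix.mul_apply, hh, sq]
  have hCtC : Cᵀ * C = 1 := by
    rw [hCdef, Matrix.transpose_mul, Matrix.transpose_transpose, Matrix.mul_assoc,
      ← Matrix.mul_assoc U Uᵀ W, hUUt, Matrix.one_mul, hWtW]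
  have htr2 : Matrix.trace (W * Wᵀ * (K * Qᵀ * (K * Qᵀ)ᵀ)) = ∑ i, s2 i * h i := by
    rw [hAAt]
    have e1 : W * Wᵀ * (U * Matrix.diagonal s2 * Uᵀ)
        = (W * (Wᵀ * U) * Matrix.diagonal s2) * Uᵀ := by
      simp only [Matrix.mul_assoc]
    rw [e1, Matrix.trace_mul_comm]
    have e2 : Uᵀ * (W * (Wᵀ * U) * Matrix.diagonal s2)
        = (Uᵀ * W * (Wᵀ * U)) * Matrix.diagonal s2 := by
      simp only [Matrix.mul_assoc]
    rw [e2, Matrix.trace_mul_comm, trace_diagonal_mul]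
    have e3 : Uᵀ * W * (Wᵀ * U) = C * Cᵀ := by
      rw [hCdef, Matrix.transpose_mul Uᵀ W, Matrix.transpose_transpose U]
    rw [e3]
    exact Finset.sum_congr rfl fun i _ => by rw [hCCt_diag]
  rw [htr1, htr2] at hopt
  -- basic facts about h
  have hfin : ∑ i, h i = (R : ℝ) := by
    have t : Matrix.trace (Cᵀ * C) = ∑ j, ∑ i, (C i j) ^ 2 := by
      simp [Matrix.trace, Matrix.diag, Matrix.mul_apply, sq]
    calc ∑ i, h i = ∑ i, ∑ j, (C i j) ^ 2 := rfl
      _ = ∑ j, ∑ i, (C i j) ^ 2 := Finset.sum_comm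
      _ = Matrix.trace (Cᵀ * C) := t.symm
      _ = (R : ℝ) := by rw [hCtC, Matrix.trace_one]; simp
  have hnonneg : ∀ i, 0 ≤ h i := fun i => Finset.sum_nonneg fun j _ => sq_nonneg _
  have hle1 : ∀ i, h i ≤ 1 := by
    intro i
    have hid : (C * Cᵀ) * (C * Cᵀ) = C * Cᵀ := by
      rw [Matrix.mul_assoc, ← Matrix.mul_assoc Cᵀ C, hCtC, Matrix.one_mul]
    have hsym : ∀ a b, (C * Cᵀ) a b = (C * Cᵀ) b a := by
      intro a b
      simp [Matrix.mul_apply, mul_comm]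
    have e : (C * Cᵀ) i i = ∑ j, ((C * Cᵀ) i j) ^ 2 := by
      conv_lhs => rw [← hid]
      rw [Matrix.mul_apply]
      refine Finset.sum_congr rfl fun j _ => ?_
      rw [hsym j i, sq]
    have key : h i ^ 2 ≤ h i := by
      calc h i ^ 2 = ((C * Cᵀ) i i) ^ 2 := by rw [hCCt_diag]
        _ ≤ ∑ j, ((C * Cᵀ) i j) ^ 2 := by
            exact Finset.single_le_sum (f := fun j => ((C * Cᵀ) i j) ^ 2)
              (fun j _ => sq_nonneg _) (Finset.mem_univ i)
        _ = (C * Cᵀ) i i := e.symm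
        _ = h i := hCCt_diag i
    nlinarith [hnonneg i, key]
  -- filters
  set flt := univ.filter (fun i : Fin T => (i : ℕ) < R) with hflt
  set fge := univ.filter (fun i : Fin T => ¬ (i : ℕ) < R) with hfge
  have hsplit : ∀ f : Fin T → ℝ, ∑ i, f i = ∑ i ∈ flt, f i + ∑ i ∈ fge, f i :=
    fun f => (Finset.sum_filter_add_sum_filter_not univ _ f).symm
  have hcard : ∑ i ∈ flt, (1 : ℝ) = (R : ℝ) := by
    rw [hflt, ← sum_castLE hTR (fun _ => (1 : ℝ))]
    simp
  have hab : (∑ i ∈ flt, h i) + (∑ i ∈ fge, h i) = (R : ℝ) := by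
    rw [← hsplit h, hfin]
  have hbge : 0 ≤ ∑ i ∈ fge, h i := Finset.sum_nonneg fun i _ => hnonneg i
  -- sums of squared singular values
  have hS_all : ∑ i, s2 i = ∑ n ∈ Finset.Ioc 0 T, σ n ^ 2 :=
    sum_fin_eq_Ioc (fun n => σ n ^ 2)
  have hS_ge : ∑ i ∈ fge, s2 i = ∑ n ∈ Finset.Ioc R T, σ n ^ 2 := by
    rw [hfge]
    exact sum_filter_ge (fun n => σ n ^ 2)
  have hIoc0 : ∑ n ∈ Finset.Ioc 0 T, σ n ^ 2
      = ∑ i ∈ flt, s2 i + ∑ n ∈ Finset.Ioc R T, σ n ^ 2 := by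
    rw [← hS_all, hsplit s2, hS_ge]
  have hIoc : ∑ n ∈ Finset.Ioc R T, σ n ^ 2
      = ∑ n ∈ Finset.Ioc R d, σ n ^ 2 + ∑ n ∈ Finset.Ioc d T, σ n ^ 2 :=
    (Finset.sum_Ioc_consecutive _ hR hTd).symm
  have hEnn : 0 ≤ ∑ n ∈ Finset.Ioc d T, σ n ^ 2 :=
    Finset.sum_nonneg fun n _ => sq_nonneg _
  -- termwise bounds
  have hσR : 0 ≤ σ R := hSVD.nonneg R hRpos
  have hbound1 : ∀ i ∈ flt, σ R ^ 2 * (1 - h i) ≤ s2 i * (1 - h i) := by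
    intro i hi
    have hiR : (i : ℕ) < R := by
      rw [hflt] at hi
      exact (Finset.mem_filter.mp hi).2
    have hmono : σ R ≤ σ ((i : ℕ) + 1) := hSVD.antitone _ _ (by omega) (by omega)
    have hs : σ R ^ 2 ≤ s2 i := by
      rw [hs2]
      exact pow_le_pow_left₀ hσR hmono 2
    exact mul_le_mul_of_nonneg_right hs (by linarith [hle1 i])
  have hbound2 : ∀ i ∈ fge, s2 i * h i ≤ σ (R + 1) ^ 2 * h i := by
    intro i hi
    have hiR : ¬ (i : ℕ) < R := by
      rw [hfge] at hi
      exact (Finset.mem_filter.mp hi).2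
    have hmono : σ ((i : ℕ) + 1) ≤ σ (R + 1) := hSVD.antitone _ _ (by omega) (by omega)
    have hs : s2 i ≤ σ (R + 1) ^ 2 := by
      rw [hs2]
      exact pow_le_pow_left₀ (hSVD.nonneg _ (by omega)) hmono 2
    exact mul_le_mul_of_nonneg_right hs (hnonneg i)
  have hsum1 : σ R ^ 2 * ((R : ℝ) - ∑ i ∈ flt, h i)
      ≤ ∑ i ∈ flt, s2 i - ∑ i ∈ flt, s2 i * h i := by
    have hl : ∑ i ∈ flt, σ R ^ 2 * (1 - h i)
        = σ R ^ 2 * ((R : ℝ) - ∑ i ∈ flt, h i) := by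
      rw [← Finset.mul_sum, Finset.sum_sub_distrib, hcard]
    have hr : ∑ i ∈ flt, s2 i * (1 - h i)
        = ∑ i ∈ flt, s2 i - ∑ i ∈ flt, s2 i * h i := by
      simp only [mul_sub, mul_one]
      rw [Finset.sum_sub_distrib]
    have := Finset.sum_le_sum hbound1
    rw [hl, hr] at this
    exact this
  have hsum2 : ∑ i ∈ fge, s2 i * h i ≤ σ (R + 1) ^ 2 * ∑ i ∈ fge, h i := by
    have := Finset.sum_le_sum hbound2
    rwa [← Finset.mul_sum] at this
  -- conclude that the tail leverage mass vanishes
  have hσR1 : 0 ≤ σ (R + 1) := hSVD.nonneg (R + 1) (by omega)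
  have hgap2 : σ (R + 1) ^ 2 < σ R ^ 2 := by nlinarith [hσR1, hgap]
  have hXY := hsplit (fun i => s2 i * h i)
  have hba : (R : ℝ) - ∑ i ∈ flt, h i = ∑ i ∈ fge, h i := by linarith [hab]
  rw [hba] at hsum1
  have hb0 : ∑ i ∈ fge, h i = 0 := by
    have hkey : σ R ^ 2 * (∑ i ∈ fge, h i) ≤ σ (R + 1) ^ 2 * (∑ i ∈ fge, h i) := by
      linarith [hopt, hXY, hIoc0, hIoc, hsum1, hsum2, hEnn, hS_all]
    have hble : ∑ i ∈ fge, h i ≤ 0 := by nlinarith [hkey, hbge, hgap2]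
    linarith [hbge]
  have hzero : ∀ i ∈ fge, h i = 0 :=
    (Finset.sum_eq_zero_iff_of_nonneg (fun i _ => hnonneg i)).mp hb0
  have hCrow : ∀ i : Fin T, ¬ ((i : ℕ) < R) → ∀ j, C i j = 0 := by
    intro i hi j
    have hi0 : h i = 0 := hzero i
      (by rw [hfge]; simp only [Finset.mem_filter, Finset.mem_univ, true_and]; exact hi)
    have := (Finset.sum_eq_zero_iff_of_nonneg
      (fun j _ => sq_nonneg (C i j))).mp hi0 j (Finset.mem_univ j)
    exact pow_eq_zero_iff (two_ne_zero) |>.mp this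
  -- the top R × R block of C is orthogonal
  have hC1tC1 : (C.submatrix (Fin.castLE hTR) id)ᵀ * (C.submatrix (Fin.castLE hTR) id) = 1 := by
    rw [← hCtC]
    ext a b
    simp only [Matrix.mul_apply, Matrix.transpose_apply, Matrix.submatrix_apply, id_eq]
    rw [sum_castLE hTR (fun i => C i a * C i b), ← hflt]
    rw [hsplit (fun i => C i a * C i b)]
    have hz : ∑ i ∈ fge, C i a * C i b = 0 := by
      refine Finset.sum_eq_zero fun i hi => ?_
      have hiR : ¬ (i : ℕ) < R := by
        rw [hfge] at hi
        exact (Finset.mem_filter.mp hi).2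
      rw [hCrow i hiR a, zero_mul]
    rw [hz, add_zero]
  have hC1C1t : (C.submatrix (Fin.castLE hTR) id) * (C.submatrix (Fin.castLE hTR) id)ᵀ = 1 :=
    mul_eq_one_comm.mp hC1tC1
  have hCCt : C * Cᵀ = Matrix.diagonal (fun i : Fin T => if (i : ℕ) < R then 1 else 0) := by
    ext i j
    rw [Matrix.mul_apply]
    simp only [Matrix.transpose_apply]
    by_cases hi : (i : ℕ) < R
    · by_cases hj : (j : ℕ) < R
      · have hii : Fin.castLE hTR ⟨(i : ℕ), hi⟩ = i := by ext; rfl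
        have hjj : Fin.castLE hTR ⟨(j : ℕ), hj⟩ = j := by ext; rfl
        have hent := Matrix.ext_iff.mpr hC1C1t ⟨(i : ℕ), hi⟩ ⟨(j : ℕ), hj⟩
        rw [Matrix.mul_apply] at hent
        simp only [Matrix.submatrix_apply, Matrix.transpose_apply, id_eq, hii, hjj] at hent
        rw [hent]
        by_cases hij : i = j
        · subst hij
          simp [Matrix.one_apply, Matrix.diagonal_apply, hi]
        · have hne : (⟨(i : ℕ), hi⟩ : Fin R) ≠ ⟨(j : ℕ), hj⟩ := by
            intro hc
            exact hij (Fin.ext (by simpa [Fin.ext_iff] using hc))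
          simp [Matrix.one_apply, Matrix.diagonal_apply, hij, hne]
      · have hz : ∀ k, C j k = 0 := hCrow j hj
        have hij : i ≠ j := fun hc => hj (hc ▸ hi)
        simp [hz, Matrix.diagonal_apply, hij]
    · have hz : ∀ k, C i k = 0 := hCrow i hi
      have hd : Matrix.diagonal (fun i : Fin T => if (i : ℕ) < R then (1:ℝ) else 0) i j = 0 := by
        by_cases hij : i = j
        · subst hij; simp [Matrix.diagonal_apply, hi]
        · simp [Matrix.diagonal_apply, hij]
      simp [hz, hd]
  -- assemble
  have hWU : W = U * C := by
    rw [hCdef, ← Matrix.mul_assoc, hUUt, Matrix.one_mul]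
  have hfinal : W * Wᵀ = firstCols U hTR * (firstCols U hTR)ᵀ := by
    rw [firstCols_eq_mul U hTR]
    calc W * Wᵀ = (U * C) * (U * C)ᵀ := by rw [← hWU]
      _ = U * (C * Cᵀ) * Uᵀ := by
          rw [Matrix.transpose_mul U C, Matrix.mul_assoc U C,
            ← Matrix.mul_assoc C Cᵀ Uᵀ, ← Matrix.mul_assoc U (C * Cᵀ) Uᵀ]
      _ = U * (embed hTR * (embed hTR)ᵀ) * Uᵀ := by
          rw [hCCt, embed_mul_embedT]
      _ = (U * embed hTR) * (U * embed hTR)ᵀ := by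
          rw [Matrix.transpose_mul U (embed hTR), Matrix.mul_assoc U (embed hTR),
            ← Matrix.mul_assoc (embed hTR) (embed hTR)ᵀ Uᵀ,
            ← Matrix.mul_assoc U (embed hTR * (embed hTR)ᵀ) Uᵀ]
  rw [firstCols_eq_mul UK hR, ← hWdef, hfinal]
end

section
/- Let K, Q ∈ ℝ^{T×d} with T ≥ d and R < d, and assume the singular value gap σ_R(K) > σ_{R+1}(K). For each β > 0 let C_β ∈ ℝ^{2T×d} be the vertical stacking of βK on top of β^{-1}Q, and let V_β ∈ ℝ^{d×R} be any matrix whose columns are the first R right singular vectors of C_β (i.e., the first R columns of V in some SVD C_β = U Σ Vᵀ). Let V̂_K ∈ ℝ^{d×R} consist of the first R right singular vectors of K. Then lim_{β→∞} ‖K V_β V_βᵀ Qᵀ − K Qᵀ‖_F = ‖K V̂_K V̂_Kᵀ Qᵀ − K Qᵀ‖_F. (Equivalently, as the ratio α = ‖β^{-1}Q‖_F / ‖βK‖_F → 0, the error of the Eigen method, which projects onto the top R right singular vectors of the stacked query–key matrix, converges to the error of K-SVD.) -/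
/-!
Since `C_βᵀ C_β = β² KᵀK + β⁻² QᵀQ`, the Eigen projection `V_β V_βᵀ` is the spectral projection
onto the top `R` eigenvectors of `β² KᵀK` perturbed by the positive semidefinite matrix
`β⁻² QᵀQ`. Ky Fan's maximum principle, applied to both matrices and sharpened on the `KᵀK` side
by the gap `σ_R² - σ_{R+1}²`, yields the Davis–Kahan bound
`‖V_β V_βᵀ - V̂_K V̂_Kᵀ‖_F² ≤ 2 β⁻⁴ tr(QᵀQ) / (σ_R² - σ_{R+1}²)`.
The error `‖K P Qᵀ - K Qᵀ‖_F` is continuous in the projection `P`.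
-/

open Matrix Finset

open Filter Topology

section Frobenius

variable {m n : Type*} [Fintype m] [Fintype n]

theorem frobNorm_nonneg (M : Matrix m n ℝ) : 0 ≤ frobNorm M := Real.sqrt_nonneg _

theorem frobNorm_sq (M : Matrix m n ℝ) : frobNorm M ^ 2 = trace (Mᵀ * M) := by
  rw [frobNorm, Real.sq_sqrt (by positivity), Finset.sum_comm]
  simp [trace, mul_apply, sq]

theorem abs_le_frobNorm (M : Matrix m n ℝ) (i : m) (j : n) : |M i j| ≤ frobNorm M := by
  refine Real.abs_le_sqrt ?_
  calc M i j ^ 2 ≤ ∑ j', M i j' ^ 2 :=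
        single_le_sum (fun j' _ => sq_nonneg (M i j')) (mem_univ j)
    _ ≤ ∑ i', ∑ j', M i' j' ^ 2 :=
        single_le_sum (f := fun i' => ∑ j', M i' j' ^ 2)
          (fun i' _ => sum_nonneg fun j' _ => sq_nonneg _) (mem_univ i)

theorem continuous_frobNorm : Continuous (frobNorm : Matrix m n ℝ → ℝ) :=
  Real.continuous_sqrt.comp <| continuous_finsetSum _ fun i _ =>
    continuous_finsetSum _ fun j _ => (continuous_id.matrix_elem i j).pow 2

theorem tendsto_of_frobNorm_sub_tendsto_zero {ι : Type*} {l : Filter ι}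
    {f : ι → Matrix m n ℝ} {M : Matrix m n ℝ}
    (h : Tendsto (fun x => frobNorm (f x - M)) l (𝓝 0)) : Tendsto f l (𝓝 M) := by
  refine tendsto_pi_nhds.2 fun i => tendsto_pi_nhds.2 fun j => ?_
  rw [tendsto_iff_norm_sub_tendsto_zero]
  exact squeeze_zero (fun _ => norm_nonneg _) (fun x => abs_le_frobNorm (f x - M) i j) h

theorem frobNorm_sub_sq_of_isIdempotentElem {P P' : Matrix n n ℝ} (hPs : P.IsSymm)
    (hPi : IsIdempotentElem P) (hP's : P'.IsSymm) (hP'i : IsIdempotentElem P') :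
    frobNorm (P - P') ^ 2 = trace P + trace P' - 2 * trace (P * P') := by
  rw [frobNorm_sq, transpose_sub, hPs.eq, hP's.eq]
  simp only [Matrix.sub_mul, Matrix.mul_sub, trace_sub, hPi.eq, hP'i.eq]
  rw [trace_mul_comm P' P]
  ring

end Frobenius

theorem sum_mul_add_gap_le {ι : Type*} [Fintype ι] [DecidableEq ι] (s : Finset ι)
    {l m : ι → ℝ} {a b : ℝ} (hm : ∀ j, m j ∈ Set.Icc 0 1) (hsum : ∑ j, m j = s.card)
    (ha : ∀ j ∈ s, a ≤ l j) (hb : ∀ j ∉ s, l j ≤ b) :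
    ∑ j, m j * l j + (a - b) * (s.card - ∑ j ∈ s, m j) ≤ ∑ j ∈ s, l j := by
  have hin : ∑ j ∈ s, (1 - m j) * a ≤ ∑ j ∈ s, (1 - m j) * l j :=
    sum_le_sum fun j hj => mul_le_mul_of_nonneg_left (ha j hj) (sub_nonneg.2 (hm j).2)
  have hout : ∑ j ∈ sᶜ, m j * l j ≤ ∑ j ∈ sᶜ, m j * b :=
    sum_le_sum fun j hj => mul_le_mul_of_nonneg_left (hb j (mem_compl.1 hj)) (hm j).1
  have hcompl : ∑ j ∈ sᶜ, m j = s.card - ∑ j ∈ s, m j := by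
    rw [← hsum, ← sum_add_sum_compl s m]
    ring
  rw [← sum_mul, hcompl] at hout
  rw [← sum_mul, sum_sub_distrib, sum_const, nsmul_eq_mul, mul_one] at hin
  simp only [sub_mul, one_mul, sum_sub_distrib] at hin
  rw [← sum_add_sum_compl s (fun j => m j * l j)]
  nlinarith

namespace Matrix

variable {n : Type*} [Fintype n]

theorem diag_mem_Icc_of_isIdempotentElem {P : Matrix n n ℝ} (hPs : P.IsSymm)
    (hPi : IsIdempotentElem P) (j : n) : P j j ∈ Set.Icc 0 1 := by
  have hjj : P j j = ∑ k, P k j ^ 2 := by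
    conv_lhs => rw [← hPi.eq, mul_apply]
    refine sum_congr rfl fun k _ => ?_
    rw [sq, ← hPs.apply j k]
  have hle : P j j ^ 2 ≤ P j j := hjj ▸ single_le_sum (fun k _ => sq_nonneg (P k j)) (mem_univ j)
  constructor <;> nlinarith

theorem trace_mul_conj_diagonal [DecidableEq n] (X V : Matrix n n ℝ) (f : n → ℝ) :
    trace (X * (V * diagonal f * Vᵀ)) = ∑ j, f j * (Vᵀ * X * V) j j := by
  rw [show X * (V * diagonal f * Vᵀ) = X * V * diagonal f * Vᵀ by simp only [Matrix.mul_assoc],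
    trace_mul_comm, ← Matrix.mul_assoc, ← Matrix.mul_assoc]
  simp [trace, mul_comm]

theorem trace_mul_nonneg_of_posSemidef {P E : Matrix n n ℝ} (hPs : P.IsSymm)
    (hPi : IsIdempotentElem P) (hE : E.PosSemidef) : 0 ≤ trace (P * E) := by
  have h := (hE.conjTranspose_mul_mul_same P).trace_nonneg
  rwa [conjTranspose_eq_transpose_of_trivial, hPs.eq, trace_mul_cycle, hPi.eq] at h

theorem trace_mul_le_trace_of_posSemidef [DecidableEq n] {P E : Matrix n n ℝ} (hPs : P.IsSymm)
    (hPi : IsIdempotentElem P) (hE : E.PosSemidef) : trace (P * E) ≤ trace E := by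
  have h := trace_mul_nonneg_of_posSemidef (isSymm_one.sub hPs) hPi.one_sub hE
  rwa [Matrix.sub_mul, Matrix.one_mul, trace_sub, sub_nonneg] at h

theorem isSymm_transpose_mul_mul {V P : Matrix n n ℝ} (hPs : P.IsSymm) : (Vᵀ * P * V).IsSymm := by
  simp [IsSymm, transpose_mul, hPs.eq, Matrix.mul_assoc]

variable [DecidableEq n]

def projCols (V : Matrix n n ℝ) (s : Finset n) : Matrix n n ℝ :=
  V * diagonal (fun j => if j ∈ s then 1 else 0) * Vᵀ

theorem isSymm_projCols (V : Matrix n n ℝ) (s : Finset n) : (projCols V s).IsSymm := by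
  simp [projCols, IsSymm, transpose_mul, Matrix.mul_assoc]

section Orthogonal

variable {V : Matrix n n ℝ} (hV : Vᵀ * V = 1)
include hV

theorem isIdempotentElem_projCols (s : Finset n) : IsIdempotentElem (projCols V s) := by
  set D : Matrix n n ℝ := diagonal fun j => if j ∈ s then 1 else 0
  have hD : D * D = D := by
    rw [diagonal_mul_diagonal]
    congr 1
    ext j
    split_ifs <;> norm_num
  calc V * D * Vᵀ * (V * D * Vᵀ) = V * (D * (Vᵀ * V) * D) * Vᵀ := by simp only [Matrix.mul_assoc]
    _ = V * D * Vᵀ := by rw [hV, Matrix.mul_one, hD]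

theorem trace_projCols (s : Finset n) : trace (projCols V s) = s.card := by
  rw [projCols, trace_mul_comm, ← Matrix.mul_assoc, hV, Matrix.one_mul, trace_diagonal,
    sum_boole, filter_mem_eq_inter, univ_inter]

theorem trace_projCols_mul_conj_diagonal (s : Finset n) (l : n → ℝ) :
    trace (projCols V s * (V * diagonal l * Vᵀ)) = ∑ j ∈ s, l j := by
  rw [trace_mul_conj_diagonal, projCols, ← Matrix.mul_assoc, ← Matrix.mul_assoc, hV,
    Matrix.one_mul, Matrix.mul_assoc, hV, Matrix.mul_one]
  simp

end Orthogonal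

/-- Ky Fan's maximum principle, sharpened by the gap `a - b` between the eigenvalues indexed by `s`
and the others. -/
theorem trace_mul_conj_diagonal_add_gap_le {V : Matrix n n ℝ} (hV : Vᵀ * V = 1) {s : Finset n}
    {l : n → ℝ} {a b : ℝ} (ha : ∀ j ∈ s, a ≤ l j) (hb : ∀ j ∉ s, l j ≤ b)
    {P : Matrix n n ℝ} (hPs : P.IsSymm) (hPi : IsIdempotentElem P) (hPtr : trace P = s.card) :
    trace (P * (V * diagonal l * Vᵀ)) + (a - b) * (s.card - trace (P * projCols V s)) ≤
      ∑ j ∈ s, l j := by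
  have hV' : V * Vᵀ = 1 := mul_eq_one_comm.1 hV
  have hXi : IsIdempotentElem (Vᵀ * P * V) := by
    rw [IsIdempotentElem, show Vᵀ * P * V * (Vᵀ * P * V) = Vᵀ * P * (V * Vᵀ) * P * V by
      simp only [Matrix.mul_assoc], hV', Matrix.mul_one, Matrix.mul_assoc Vᵀ, hPi.eq]
  have hXtr : ∑ j, (Vᵀ * P * V) j j = s.card := by
    change trace (Vᵀ * P * V) = _
    rw [← hPtr, trace_mul_cycle, hV', Matrix.one_mul]
  rw [trace_mul_conj_diagonal, projCols, trace_mul_conj_diagonal]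
  simp only [ite_mul, one_mul, zero_mul, sum_ite_mem, univ_inter]
  simpa only [mul_comm] using sum_mul_add_gap_le s
    (diag_mem_Icc_of_isIdempotentElem (isSymm_transpose_mul_mul hPs) hXi) hXtr ha hb

/-- A Davis–Kahan `sin Θ` bound for a positive semidefinite perturbation. -/
theorem gap_mul_frobNorm_projCols_sub_sq_le {V W : Matrix n n ℝ} (hV : Vᵀ * V = 1)
    (hW : Wᵀ * W = 1) {s : Finset n} {l μ : n → ℝ} {a b c : ℝ} (ha : ∀ j ∈ s, a ≤ l j)
    (hb : ∀ j ∉ s, l j ≤ b) (hμa : ∀ j ∈ s, c ≤ μ j) (hμb : ∀ j ∉ s, μ j ≤ c)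
    {E : Matrix n n ℝ} (hE : E.PosSemidef) (h : V * diagonal l * Vᵀ + E = W * diagonal μ * Wᵀ) :
    (a - b) * frobNorm (projCols W s - projCols V s) ^ 2 ≤ 2 * trace E := by
  have hmax := trace_mul_conj_diagonal_add_gap_le hW hμa hμb (isSymm_projCols V s)
    (isIdempotentElem_projCols hV s) (trace_projCols hV s)
  have hgap := trace_mul_conj_diagonal_add_gap_le hV ha hb (isSymm_projCols W s)
    (isIdempotentElem_projCols hW s) (trace_projCols hW s)
  rw [← trace_projCols_mul_conj_diagonal hW s μ, ← h, Matrix.mul_add, Matrix.mul_add, trace_add,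
    trace_add, trace_projCols_mul_conj_diagonal hV] at hmax
  have hVE := trace_mul_nonneg_of_posSemidef (isSymm_projCols V s)
    (isIdempotentElem_projCols hV s) hE
  have hWE := trace_mul_le_trace_of_posSemidef (isSymm_projCols W s)
    (isIdempotentElem_projCols hW s) hE
  rw [frobNorm_sub_sq_of_isIdempotentElem (isSymm_projCols W s) (isIdempotentElem_projCols hW s)
    (isSymm_projCols V s) (isIdempotentElem_projCols hV s), trace_projCols hV,
    trace_projCols hW]
  linarith

theorem transpose_mul_fromRows {m₁ m₂ n : Type*} [Fintype m₁] [Fintype m₂]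
    (A : Matrix m₁ n ℝ) (B : Matrix m₂ n ℝ) :
    (fromRows A B)ᵀ * fromRows A B = Aᵀ * A + Bᵀ * B := by
  rw [transpose_fromRows, fromCols_mul_fromRows]

end Matrix

theorem Fin.map_castLEEmb_univ {R d : ℕ} (h : R ≤ d) :
    univ.map (Fin.castLEEmb h) = univ.filter fun j : Fin d => (j : ℕ) < R := by
  ext j
  simp only [Finset.mem_map, mem_univ, true_and, mem_filter]
  exact Set.ext_iff.1 (Fin.range_castLE h) j

theorem firstCols_mul_transpose {d R : ℕ} (h : R ≤ d) (V : Matrix (Fin d) (Fin d) ℝ) :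
    firstCols V h * (firstCols V h)ᵀ = projCols V (univ.filter fun j : Fin d => (j : ℕ) < R) := by
  ext i i'
  rw [projCols, mul_apply, mul_apply, ← Fin.map_castLEEmb_univ h]
  simp only [mul_diagonal, transpose_apply, firstCols, submatrix_apply, id, mul_ite, mul_one,
    mul_zero, ite_mul, zero_mul, sum_ite_mem, univ_inter, sum_map]
  rfl

namespace IsSVD

variable {α β : Type*} [Fintype α] [Fintype β] {r : ℕ} {M : Matrix α β ℝ}
  {U : Matrix α (Fin r) ℝ} {σ : ℕ → ℝ} {V : Matrix β (Fin r) ℝ}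

theorem transpose_mul_self (h : IsSVD M U σ V) :
    Mᵀ * M = V * diagonal (fun i : Fin r => σ ((i : ℕ) + 1) ^ 2) * Vᵀ := by
  set D := diagonal fun i : Fin r => σ ((i : ℕ) + 1)
  calc Mᵀ * M = V * (D * (Uᵀ * U) * D) * Vᵀ := by
        rw [h.factorization]
        simp only [D, transpose_mul, transpose_transpose, diagonal_transpose, Matrix.mul_assoc]
    _ = _ := by rw [h.leftOrtho, Matrix.mul_one, diagonal_mul_diagonal]; simp only [sq]

theorem smul (h : IsSVD M U σ V) {c : ℝ} (hc : 0 ≤ c) : IsSVD (c • M) U (c • σ) V where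
  factorization := by
    rw [h.factorization, ← Matrix.smul_mul, ← Matrix.mul_smul, ← diagonal_smul]
    rfl
  leftOrtho := h.leftOrtho
  rightOrtho := h.rightOrtho
  antitone i j hi hij := mul_le_mul_of_nonneg_left (h.antitone i j hi hij) hc
  nonneg i hi := mul_nonneg hc (h.nonneg i hi)
  padZero i hi := by simp [h.padZero i hi]

theorem sq_le_sq {i j : ℕ} (h : IsSVD M U σ V) (hi : 1 ≤ i) (hij : i ≤ j) : σ j ^ 2 ≤ σ i ^ 2 :=
  pow_le_pow_left₀ (h.nonneg j (hi.trans hij)) (h.antitone i j hi hij) 2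

end IsSVD

section Eigen

variable {m : Type*} [Fintype m] {d R : ℕ} {K Q UK : Matrix m (Fin d) ℝ} {σK : ℕ → ℝ}
  {VK : Matrix (Fin d) (Fin d) ℝ}

theorem frobNorm_projCols_fromRows_sub_sq_le (hK : IsSVD K UK σK VK) (hgap : σK (R + 1) < σK R)
    {β : ℝ} (hβ : 0 < β) {U : Matrix (m ⊕ m) (Fin d) ℝ} {σ : ℕ → ℝ}
    {V : Matrix (Fin d) (Fin d) ℝ} (h : IsSVD (fromRows (β • K) (β⁻¹ • Q)) U σ V) :
    frobNorm (projCols V (univ.filter fun j : Fin d => (j : ℕ) < R) -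
        projCols VK (univ.filter fun j : Fin d => (j : ℕ) < R)) ^ 2 ≤
      2 * trace (Qᵀ * Q) / (σK R ^ 2 - σK (R + 1) ^ 2) * (β ^ 4)⁻¹ := by
  have hKβ := hK.smul hβ.le
  have hE : ((β⁻¹ • Q)ᵀ * (β⁻¹ • Q)).PosSemidef := by
    simpa only [conjTranspose_eq_transpose_of_trivial] using
      posSemidef_conjTranspose_mul_self (β⁻¹ • Q)
  have hs (j : Fin d) : j ∈ univ.filter (fun j : Fin d => (j : ℕ) < R) ↔ (j : ℕ) < R := by simp
  have hDK := gap_mul_frobNorm_projCols_sub_sq_le hK.rightOrtho h.rightOrtho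
    (s := univ.filter fun j : Fin d => (j : ℕ) < R)
    (l := fun i => (β • σK) (i + 1) ^ 2) (μ := fun i => σ (i + 1) ^ 2)
    (a := (β • σK) R ^ 2) (b := (β • σK) (R + 1) ^ 2) (c := σ (R + 1) ^ 2)
    (fun k hk => hKβ.sq_le_sq (by omega) (by have := (hs k).1 hk; omega))
    (fun k hk => hKβ.sq_le_sq (by omega) (by have := mt (hs k).2 hk; omega))
    (fun k hk => h.sq_le_sq (by omega) (by have := (hs k).1 hk; omega))
    (fun k hk => h.sq_le_sq (by omega) (by have := mt (hs k).2 hk; omega)) hE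
    (by rw [← hKβ.transpose_mul_self, ← h.transpose_mul_self, transpose_mul_fromRows])
  have hδ : 0 < σK R ^ 2 - σK (R + 1) ^ 2 := by nlinarith [hK.nonneg (R + 1) (by omega)]
  simp only [Pi.smul_apply, smul_eq_mul, transpose_smul, Matrix.smul_mul, Matrix.mul_smul,
    trace_smul] at hDK
  rw [← div_eq_mul_inv, div_div, le_div_iff₀ (by positivity)]
  have := mul_le_mul_of_nonneg_left hDK (sq_nonneg β)
  field_simp at this
  nlinarith

theorem tendsto_projCols_fromRows (hK : IsSVD K UK σK VK) (hgap : σK (R + 1) < σK R)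
    {V : ℝ → Matrix (Fin d) (Fin d) ℝ}
    (hV : ∀ β : ℝ, 0 < β → ∃ (U : Matrix (m ⊕ m) (Fin d) ℝ) (σ : ℕ → ℝ),
      IsSVD (fromRows (β • K) (β⁻¹ • Q)) U σ (V β)) :
    Tendsto (fun β => projCols (V β) (univ.filter fun j : Fin d => (j : ℕ) < R)) atTop
      (𝓝 (projCols VK (univ.filter fun j : Fin d => (j : ℕ) < R))) := by
  refine tendsto_of_frobNorm_sub_tendsto_zero ?_
  set C := 2 * trace (Qᵀ * Q) / (σK R ^ 2 - σK (R + 1) ^ 2)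
  have hC : Tendsto (fun β : ℝ => C * (β ^ 4)⁻¹) atTop (𝓝 0) := by
    simpa using (tendsto_inv_atTop_zero.comp (tendsto_pow_atTop four_ne_zero)).const_mul C
  have hsq := squeeze_zero' (Eventually.of_forall fun β => sq_nonneg _)
    ((eventually_gt_atTop 0).mono fun β hβ => by
      obtain ⟨U, σ, h⟩ := hV β hβ
      exact frobNorm_projCols_fromRows_sub_sq_le hK hgap hβ h) hC
  simpa only [Real.sqrt_sq (frobNorm_nonneg _), Real.sqrt_zero] using hsq.sqrt

end Eigen

open Filter in
theorem eigen_tends_to_ksvd_general (T d R : ℕ) (hR : R < d)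
    (K Q : Matrix (Fin T) (Fin d) ℝ)
    (UK : Matrix (Fin T) (Fin d) ℝ) (σK : ℕ → ℝ) (VK : Matrix (Fin d) (Fin d) ℝ)
    (hKSVD : IsSVD K UK σK VK)
    (hgap : σK R > σK (R + 1))
    (Vb : ℝ → Matrix (Fin d) (Fin R) ℝ)
    (hVb : ∀ β : ℝ, 0 < β →
      ∃ (U : Matrix (Fin T ⊕ Fin T) (Fin d) ℝ) (σ : ℕ → ℝ)
        (V : Matrix (Fin d) (Fin d) ℝ),
        IsSVD (Matrix.fromRows (β • K) (β⁻¹ • Q)) U σ V ∧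
          Vb β = firstCols V hR.le) :
    Tendsto (fun β : ℝ => frobNorm (K * Vb β * (Vb β)ᵀ * Qᵀ - K * Qᵀ)) atTop
      (nhds (frobNorm (K * firstCols VK hR.le * (firstCols VK hR.le)ᵀ * Qᵀ -
        K * Qᵀ))) := by
  choose! U σ V hSVD hVb using hVb
  have hproj : Tendsto (fun β => Vb β * (Vb β)ᵀ) atTop
      (𝓝 (firstCols VK hR.le * (firstCols VK hR.le)ᵀ)) := by
    rw [firstCols_mul_transpose]
    refine (tendsto_projCols_fromRows hKSVD hgap fun β hβ => ⟨U β, σ β, hSVD β hβ⟩).congr' ?_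
    filter_upwards [eventually_gt_atTop 0] with β hβ
    rw [hVb β hβ, firstCols_mul_transpose]
  have herr : Continuous fun P : Matrix (Fin d) (Fin d) ℝ => frobNorm (K * P * Qᵀ - K * Qᵀ) :=
    continuous_frobNorm.comp <|
      ((continuous_const.matrix_mul continuous_id).matrix_mul continuous_const).sub continuous_const
  simpa only [Function.comp_def, Matrix.mul_assoc] using (herr.tendsto _).comp hproj

open Filter in
/-- Theorem 4 (KQ-SVD paper): under a singular value gap `σ_R(K) > σ_{R+1}(K)`, as the
unbalance factor `β → ∞`, the attention approximation error of the Eigen method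
(projecting onto the first `R` right singular vectors of the stacked matrix
`[βK; β⁻¹Q]`) converges to the error of K-SVD. -/
theorem eigen_tends_to_ksvd (T d R : ℕ) (hTd : d ≤ T) (hR : R < d)
    (K Q : Matrix (Fin T) (Fin d) ℝ)
    (UK : Matrix (Fin T) (Fin d) ℝ) (σK : ℕ → ℝ) (VK : Matrix (Fin d) (Fin d) ℝ)
    (hKSVD : IsSVD K UK σK VK)
    (hgap : σK R > σK (R + 1))
    (Vb : ℝ → Matrix (Fin d) (Fin R) ℝ)
    (hVb : ∀ β : ℝ, 0 < β →
      ∃ (U : Matrix (Fin T ⊕ Fin T) (Fin d) ℝ) (σ : ℕ → ℝ)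
        (V : Matrix (Fin d) (Fin d) ℝ),
        IsSVD (Matrix.fromRows (β • K) (β⁻¹ • Q)) U σ V ∧
          Vb β = firstCols V hR.le) :
    Tendsto (fun β : ℝ => frobNorm (K * Vb β * (Vb β)ᵀ * Qᵀ - K * Qᵀ)) atTop
      (nhds (frobNorm (K * firstCols VK hR.le * (firstCols VK hR.le)ᵀ * Qᵀ -
        K * Qᵀ))) :=
  eigen_tends_to_ksvd_general T d R hR K Q UK σK VK hKSVD hgap Vb hVb
end

section
/- Let K ∈ ℝ^{T×d}, let m ≥ 1, and let Q_1, …, Q_m ∈ ℝ^{T×d} each have full column rank d. Let Q ∈ ℝ^{mT×d} be the vertical stacking of Q_1, …, Q_m. Then for every R ≤ d, inf over A, B_1, …, B_m ∈ ℝ^{d×R} of Σ_{i=1}^{m} ‖K A B_iᵀ Q_iᵀ − K Q_iᵀ‖_F² equals inf over A, B ∈ ℝ^{d×R} of ‖K A Bᵀ Qᵀ − K Qᵀ‖_F²; that is, in grouped-query attention, the grouped minimization with separate matrices B_i per query head achieves the same optimal value as the single-B minimization with stacked queries. -/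
open Matrix Finset

/-!
Both objectives only depend on `A` through `X = K A`. For fixed `X`, the `i`-th grouped term
`‖X (Q_i B_i)ᵀ - K Q_iᵀ‖²` is at least the residual of the orthogonal projection `X G` onto the
column space of `X` (where `Xᵀ X G = Xᵀ`, the normal equations), applied to `K Q_iᵀ`. That
residual is attained by the single matrix `B = (G K)ᵀ`, the same for every head, and for a
single `B` the grouped objective is the stacked one.
-/

section Frobenius

variable {α β γ : Type*} [Fintype α] [Fintype β] [Fintype γ]

theorem frobNorm_sq_s10 (M : Matrix α β ℝ) : frobNorm M ^ 2 = ∑ i, ∑ j, M i j ^ 2 :=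
  Real.sq_sqrt (by positivity)

theorem frobNorm_sq_eq_trace (M : Matrix α β ℝ) : frobNorm M ^ 2 = (Mᵀ * M).trace := by
  rw [frobNorm_sq_s10, Finset.sum_comm]
  simp [Matrix.trace, Matrix.mul_apply, sq]

theorem frobNorm_add_sq_of_transpose_mul_eq_zero {M N : Matrix α β ℝ} (h : Mᵀ * N = 0) :
    frobNorm (M + N) ^ 2 = frobNorm M ^ 2 + frobNorm N ^ 2 := by
  have h' : Nᵀ * M = 0 := by
    rw [← transpose_transpose (Nᵀ * M), transpose_mul, transpose_transpose, h, transpose_zero]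
  simp only [frobNorm_sq_eq_trace, transpose_add, Matrix.add_mul, Matrix.mul_add, h, h',
    trace_add, trace_zero]
  ring

theorem frobNorm_sub_sq_le_of_transpose_mul_self_mul_eq {X : Matrix α γ ℝ} {G : Matrix γ α ℝ}
    (hG : Xᵀ * X * G = Xᵀ) (Y : Matrix α β ℝ) (Z : Matrix γ β ℝ) :
    frobNorm (X * G * Y - Y) ^ 2 ≤ frobNorm (X * Z - Y) ^ 2 := by
  have horth : (X * (Z - G * Y))ᵀ * (X * G * Y - Y) = 0 := by
    rw [transpose_mul, Matrix.mul_assoc, Matrix.mul_sub, ← Matrix.mul_assoc Xᵀ,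
      ← Matrix.mul_assoc Xᵀ, hG, sub_self, Matrix.mul_zero]
  have hsplit : X * Z - Y = X * (Z - G * Y) + (X * G * Y - Y) := by
    rw [Matrix.mul_sub, Matrix.mul_assoc]
    abel
  rw [hsplit, frobNorm_add_sq_of_transpose_mul_eq_zero horth]
  exact le_add_of_nonneg_left (sq_nonneg _)

theorem frobNorm_mul_stack_transpose_sq {ι τ δ : Type*} [Fintype ι] [Fintype τ] [Fintype δ]
    (M : Matrix α δ ℝ) (Q : ι → Matrix τ δ ℝ) :
    frobNorm (M * (Matrix.of fun (p : ι × τ) j => Q p.1 p.2 j)ᵀ) ^ 2 =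
      ∑ i, frobNorm (M * (Q i)ᵀ) ^ 2 := by
  simp only [frobNorm_sq_s10, Fintype.sum_prod_type]
  rw [Finset.sum_comm]
  simp [Matrix.mul_apply]

end Frobenius

theorem Matrix.exists_transpose_mul_self_mul_eq_transpose {m n R : Type*} [Fintype m]
    [Fintype n] [Field R] [LinearOrder R] [IsStrictOrderedRing R] (X : Matrix m n R) :
    ∃ G : Matrix n m R, Xᵀ * X * G = Xᵀ := by
  classical
  have hrange : LinearMap.range (Xᵀ * X).mulVecLin = LinearMap.range Xᵀ.mulVecLin := by
    refine Submodule.eq_of_le_of_finrank_eq ?_ ?_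
    · rw [mulVecLin_mul]
      exact LinearMap.range_comp_le_range _ _
    · change (Xᵀ * X).rank = Xᵀ.rank
      rw [rank_transpose_mul_self, rank_transpose]
  have hcol : ∀ j, ∃ g, (Xᵀ * X) *ᵥ g = fun i => Xᵀ i j := by
    intro j
    have hj : (fun i => Xᵀ i j) ∈ LinearMap.range Xᵀ.mulVecLin :=
      ⟨Pi.single j 1, by ext i; simp⟩
    rw [← hrange] at hj
    exact hj
  choose g hg using hcol
  refine ⟨Matrix.of fun k j => g j k, ?_⟩
  ext i j
  simpa [mulVec, dotProduct, mul_apply] using congrFun (hg j) i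

theorem gqa_equivalence_general (T d m R : ℕ)
    (K : Matrix (Fin T) (Fin d) ℝ)
    (Q : Fin m → Matrix (Fin T) (Fin d) ℝ) :
    sInf {e : ℝ | ∃ (A : Matrix (Fin d) (Fin R) ℝ)
          (B : Fin m → Matrix (Fin d) (Fin R) ℝ),
        e = ∑ i, frobNorm (K * A * (B i)ᵀ * (Q i)ᵀ - K * (Q i)ᵀ) ^ 2} =
      sInf {e : ℝ | ∃ A B : Matrix (Fin d) (Fin R) ℝ,
        e = frobNorm
          (K * A * Bᵀ * (Matrix.of fun (p : Fin m × Fin T) (j : Fin d) =>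
              Q p.1 p.2 j)ᵀ -
            K * (Matrix.of fun (p : Fin m × Fin T) (j : Fin d) =>
              Q p.1 p.2 j)ᵀ) ^ 2} := by
  have hstack : ∀ A B : Matrix (Fin d) (Fin R) ℝ,
      frobNorm (K * A * Bᵀ * (Matrix.of fun (p : Fin m × Fin T) (j : Fin d) => Q p.1 p.2 j)ᵀ -
          K * (Matrix.of fun (p : Fin m × Fin T) (j : Fin d) => Q p.1 p.2 j)ᵀ) ^ 2 =
        ∑ i, frobNorm (K * A * Bᵀ * (Q i)ᵀ - K * (Q i)ᵀ) ^ 2 := by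
    intro A B
    simp only [← Matrix.sub_mul, frobNorm_mul_stack_transpose_sq]
  apply csInf_eq_csInf_of_forall_exists_le
  · rintro _ ⟨A, B, rfl⟩
    obtain ⟨G, hG⟩ := (K * A).exists_transpose_mul_self_mul_eq_transpose
    refine ⟨_, ⟨A, (G * K)ᵀ, rfl⟩, ?_⟩
    rw [hstack]
    refine Finset.sum_le_sum fun i _ => ?_
    simpa only [transpose_transpose, Matrix.mul_assoc] using
      frobNorm_sub_sq_le_of_transpose_mul_self_mul_eq hG (K * (Q i)ᵀ) ((B i)ᵀ * (Q i)ᵀ)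
  · rintro _ ⟨A, B, rfl⟩
    exact ⟨_, ⟨A, fun _ => B, rfl⟩, (hstack A B).ge⟩

/-- Theorem 5 (KQ-SVD paper): in grouped-query attention, where `m` full-column-rank
query caches `Q_1, …, Q_m` share a single key cache `K`, the grouped minimization
with separate matrices `B_i` per query head achieves the same optimal value as the
single-`B` minimization with the vertically stacked query matrix. -/
theorem gqa_equivalence (T d m R : ℕ) (hm : 1 ≤ m) (hR : R ≤ d)
    (K : Matrix (Fin T) (Fin d) ℝ)
    (Q : Fin m → Matrix (Fin T) (Fin d) ℝ)
    (hQ : ∀ i, (Q i).rank = d) :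
    sInf {e : ℝ | ∃ (A : Matrix (Fin d) (Fin R) ℝ)
          (B : Fin m → Matrix (Fin d) (Fin R) ℝ),
        e = ∑ i, frobNorm (K * A * (B i)ᵀ * (Q i)ᵀ - K * (Q i)ᵀ) ^ 2} =
      sInf {e : ℝ | ∃ A B : Matrix (Fin d) (Fin R) ℝ,
        e = frobNorm
          (K * A * Bᵀ * (Matrix.of fun (p : Fin m × Fin T) (j : Fin d) =>
              Q p.1 p.2 j)ᵀ -
            K * (Matrix.of fun (p : Fin m × Fin T) (j : Fin d) =>
              Q p.1 p.2 j)ᵀ) ^ 2} :=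
  gqa_equivalence_general T d m R K Q
end

section
/- Let K ∈ ℝ^{T×d}, A ∈ ℝ^{d×R}, and let Q ∈ ℝ^{T×d} have full column rank d. Then a matrix B* ∈ ℝ^{d×R} minimizes B ↦ ‖K A Bᵀ Qᵀ − K Qᵀ‖_F over ℝ^{d×R} if and only if it minimizes B ↦ ‖K A Bᵀ − K‖_F over ℝ^{d×R}; in particular, the set of minimizers of the first problem does not depend on Q. -/
open Matrix Finset

noncomputable def frobSq {α β : Type*} [Fintype α] [Fintype β] (M : Matrix α β ℝ) : ℝ :=
  Matrix.trace (Mᵀ * M)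

lemma frobSq_eq_sum {α β : Type*} [Fintype α] [Fintype β] (M : Matrix α β ℝ) :
    frobSq M = ∑ i, ∑ j, (M i j)^2 := by
  simp [frobSq, Matrix.trace, Matrix.mul_apply, Matrix.diag, sq]
  rw [Finset.sum_comm]

lemma frobSq_nonneg {α β : Type*} [Fintype α] [Fintype β] (M : Matrix α β ℝ) :
    0 ≤ frobSq M := by
  rw [frobSq_eq_sum]
  exact Finset.sum_nonneg fun i _ => Finset.sum_nonneg fun j _ => sq_nonneg _

lemma frobSq_pos {α β : Type*} [Fintype α] [Fintype β] {M : Matrix α β ℝ} (h : M ≠ 0) :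
    0 < frobSq M := by
  rcases (frobSq_nonneg M).lt_or_eq with h' | h'
  · exact h'
  exfalso; apply h
  ext i j
  have h1 := (Finset.sum_eq_zero_iff_of_nonneg
    (fun i _ => Finset.sum_nonneg fun j _ => sq_nonneg (M i j))).mp
    (by rw [← frobSq_eq_sum, ← h'])
  have h2 := (Finset.sum_eq_zero_iff_of_nonneg (fun j _ => sq_nonneg (M i j))).mp
    (h1 i (Finset.mem_univ i)) j (Finset.mem_univ j)
  simpa [pow_eq_zero_iff] using h2

lemma frobNorm_eq_sqrt {α β : Type*} [Fintype α] [Fintype β] (M : Matrix α β ℝ) :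
    frobNorm M = Real.sqrt (frobSq M) := by
  rw [frobNorm, frobSq_eq_sum]

lemma frobNorm_le_iff {α β γ δ : Type*} [Fintype α] [Fintype β] [Fintype γ] [Fintype δ]
    (M : Matrix α β ℝ) (N : Matrix γ δ ℝ) :
    frobNorm M ≤ frobNorm N ↔ frobSq M ≤ frobSq N := by
  rw [frobNorm_eq_sqrt, frobNorm_eq_sqrt]
  constructor
  · intro h
    nlinarith [Real.sq_sqrt (frobSq_nonneg M), Real.sq_sqrt (frobSq_nonneg N),
      Real.sqrt_nonneg (frobSq M), Real.sqrt_nonneg (frobSq N)]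
  · exact fun h => Real.sqrt_le_sqrt h

lemma frobSq_add {α β : Type*} [Fintype α] [Fintype β] (M N : Matrix α β ℝ) :
    frobSq (M + N) = frobSq M + 2 * Matrix.trace (Mᵀ * N) + frobSq N := by
  have h : Matrix.trace (Nᵀ * M) = Matrix.trace (Mᵀ * N) := by
    rw [← Matrix.trace_transpose (Nᵀ * M), Matrix.transpose_mul, Matrix.transpose_transpose]
  simp only [frobSq, Matrix.transpose_add, Matrix.add_mul, Matrix.mul_add, Matrix.trace_add, h]
  ring

lemma cross_term {α β γ : Type*} [Fintype α] [Fintype β] [Fintype γ]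
    (M : Matrix α β ℝ) (N : Matrix α β ℝ) (P : Matrix γ β ℝ) :
    Matrix.trace ((M * Pᵀ)ᵀ * (N * Pᵀ)) = Matrix.trace ((Mᵀ * N) * (Pᵀ * P)) := by
  rw [Matrix.transpose_mul, Matrix.transpose_transpose, ← Matrix.mul_assoc,
    Matrix.trace_mul_comm, Matrix.trace_mul_comm (Mᵀ * N)]
  congr 1
  simp [Matrix.mul_assoc]

/-- Key lemma: over an invertible weighting `PᵀP`, a matrix `Z` minimizes
`Z' ↦ frobSq ((X Z' − K) Pᵀ)` iff the normal equation `Xᵀ(XZ − K) = 0` holds. -/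
lemma key_lemma {α β γ ρ : Type*} [Fintype α] [Fintype β] [Fintype γ] [Fintype ρ]
    [DecidableEq β] (X : Matrix α ρ ℝ) (K : Matrix α β ℝ) (P : Matrix γ β ℝ)
    (hP : IsUnit (Pᵀ * P)) (Z : Matrix ρ β ℝ) :
    (∀ Z' : Matrix ρ β ℝ,
        frobSq ((X * Z - K) * Pᵀ) ≤ frobSq ((X * Z' - K) * Pᵀ)) ↔
      Xᵀ * (X * Z - K) = 0 := by
  set Rm := X * Z - K with hRm
  set W : Matrix β β ℝ := Pᵀ * P with hW
  set N := Xᵀ * Rm with hN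
  have hWsymm : Wᵀ = W := by rw [hW, Matrix.transpose_mul, Matrix.transpose_transpose]
  constructor
  · intro hmin
    by_contra hne
    set G := N * W with hG
    have hGne : G ≠ 0 := by
      intro h0
      apply hne
      obtain ⟨u, hu⟩ := hP
      have h1 : W * (↑u⁻¹ : Matrix β β ℝ) = 1 := by rw [← hu]; exact u.mul_inv
      have : N = N * (W * (↑u⁻¹ : Matrix β β ℝ)) := by rw [h1, Matrix.mul_one]
      rw [← Matrix.mul_assoc, ← hG, h0, Matrix.zero_mul] at this
      exact this
    set c := frobSq G with hc
    have hcpos : 0 < c := frobSq_pos hGne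
    set b := frobSq (X * G * Pᵀ) with hb
    have hbnn : 0 ≤ b := frobSq_nonneg _
    set t := c / (b + 1) with ht
    have htpos : 0 < t := div_pos hcpos (by linarith)
    have hZ' := hmin (Z - t • G)
    have hexp : X * (Z - t • G) - K = Rm + (-t) • (X * G) := by
      rw [hRm, Matrix.mul_sub, Matrix.mul_smul, neg_smul]
      abel
    rw [hexp, Matrix.add_mul, frobSq_add] at hZ'
    -- cross term equals -t * c
    have hGG : Gᵀ * G = W * (Nᵀ * (N * W)) := by
      rw [hG, Matrix.transpose_mul, hWsymm]
      simp [Matrix.mul_assoc]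
    have hc2 : Matrix.trace ((Rm * Pᵀ)ᵀ * ((X * G) * Pᵀ)) = c := by
      rw [cross_term, ← hW, hc, frobSq, hGG, Matrix.trace_mul_comm]
      congr 1
      rw [hG, hN, Matrix.transpose_mul, Matrix.transpose_transpose]
      simp only [Matrix.mul_assoc]
    have hct : Matrix.trace ((Rm * Pᵀ)ᵀ * ((-t) • (X * G) * Pᵀ)) = -t * c := by
      rw [Matrix.smul_mul, Matrix.mul_smul, Matrix.trace_smul, smul_eq_mul, hc2]
    rw [hct] at hZ'
    have hsmul : frobSq ((-t) • (X * G) * Pᵀ) = t^2 * b := by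
      rw [Matrix.smul_mul, frobSq, Matrix.transpose_smul, Matrix.smul_mul, Matrix.mul_smul,
        Matrix.trace_smul, Matrix.trace_smul, smul_eq_mul, smul_eq_mul, hb, frobSq]
      ring
    rw [hsmul] at hZ'
    have htb : t * b ≤ c := by
      rw [ht, div_mul_eq_mul_div, div_le_iff₀ (by linarith)]
      nlinarith
    nlinarith [htpos, hcpos]
  · intro h0 Z'
    have hRX : Rmᵀ * X = 0 := by
      have := congrArg Matrix.transpose h0
      rwa [Matrix.transpose_mul, Matrix.transpose_transpose, Matrix.transpose_zero] at this
    have hexp : X * Z' - K = Rm + X * (Z' - Z) := by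
      rw [hRm, Matrix.mul_sub]; abel
    rw [hexp, Matrix.add_mul, frobSq_add, cross_term]
    have hz : Rmᵀ * (X * (Z' - Z)) = 0 := by
      rw [← Matrix.mul_assoc, hRX, Matrix.zero_mul]
    rw [hz]
    simp only [Matrix.zero_mul, Matrix.trace_zero]
    linarith [frobSq_nonneg ((X * (Z' - Z)) * Pᵀ)]

lemma isUnit_transpose_mul_self_of_rank {T d : ℕ} (Q : Matrix (Fin T) (Fin d) ℝ)
    (hQ : Q.rank = d) : IsUnit (Qᵀ * Q) := by
  rw [← Matrix.mulVec_surjective_iff_isUnit]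
  have hrank : (Qᵀ * Q).rank = d := by rw [Matrix.rank_transpose_mul_self, hQ]
  have htop : LinearMap.range (Qᵀ * Q).mulVecLin = ⊤ := by
    apply Submodule.eq_top_of_finrank_eq
    rw [← Matrix.rank, hrank]
    simp [Module.finrank_fintype_fun_eq_card]
  intro v
  have hv := htop ▸ Submodule.mem_top (R := ℝ) (x := v)
  obtain ⟨w, hw⟩ := LinearMap.mem_range.mp hv
  exact ⟨w, hw⟩

/-- For a full-column-rank `Q`, a matrix `B*` minimizes `B ↦ ‖K A Bᵀ Qᵀ − K Qᵀ‖_F`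
if and only if it minimizes `B ↦ ‖K A Bᵀ − K‖_F`; in particular the set of minimizers
of the first problem does not depend on `Q`. -/
theorem minimizer_independent_of_Q (T d R : ℕ)
    (K : Matrix (Fin T) (Fin d) ℝ) (A : Matrix (Fin d) (Fin R) ℝ)
    (Q : Matrix (Fin T) (Fin d) ℝ) (hQ : Q.rank = d) :
    ∀ Bstar : Matrix (Fin d) (Fin R) ℝ,
      (∀ B : Matrix (Fin d) (Fin R) ℝ,
          frobNorm (K * A * Bstarᵀ * Qᵀ - K * Qᵀ) ≤
            frobNorm (K * A * Bᵀ * Qᵀ - K * Qᵀ)) ↔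
        (∀ B : Matrix (Fin d) (Fin R) ℝ,
          frobNorm (K * A * Bstarᵀ - K) ≤ frobNorm (K * A * Bᵀ - K)) := by
  intro Bstar
  have hQunit : IsUnit (Qᵀ * Q) := isUnit_transpose_mul_self_of_rank Q hQ
  have h1unit : IsUnit ((1 : Matrix (Fin d) (Fin d) ℝ)ᵀ * 1) := by simp
  have e1 : ∀ B : Matrix (Fin d) (Fin R) ℝ,
      K * A * Bᵀ * Qᵀ - K * Qᵀ = ((K * A) * Bᵀ - K) * Qᵀ := by
    intro B; rw [Matrix.sub_mul]
  have e2 : ∀ B : Matrix (Fin d) (Fin R) ℝ,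
      K * A * Bᵀ - K = ((K * A) * Bᵀ - K) * (1 : Matrix (Fin d) (Fin d) ℝ)ᵀ := by
    intro B; rw [Matrix.transpose_one, Matrix.mul_one]
  have hA : (∀ B : Matrix (Fin d) (Fin R) ℝ,
      frobNorm (K * A * Bstarᵀ * Qᵀ - K * Qᵀ) ≤ frobNorm (K * A * Bᵀ * Qᵀ - K * Qᵀ)) ↔
      (K * A)ᵀ * ((K * A) * Bstarᵀ - K) = 0 := by
    rw [← key_lemma (K * A) K Q hQunit Bstarᵀ]
    constructor
    · intro h Z'
      have := h Z'ᵀ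
      rw [frobNorm_le_iff, e1 Bstar, e1 Z'ᵀ] at this
      simpa using this
    · intro h B
      rw [frobNorm_le_iff, e1 Bstar, e1 B]
      exact h Bᵀ
  have hB : (∀ B : Matrix (Fin d) (Fin R) ℝ,
      frobNorm (K * A * Bstarᵀ - K) ≤ frobNorm (K * A * Bᵀ - K)) ↔
      (K * A)ᵀ * ((K * A) * Bstarᵀ - K) = 0 := by
    rw [← key_lemma (K * A) K (1 : Matrix (Fin d) (Fin d) ℝ) h1unit Bstarᵀ]
    constructor
    · intro h Z'
      have := h Z'ᵀ
      rw [frobNorm_le_iff, e2 Bstar, e2 Z'ᵀ] at this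
      simpa using this
    · intro h B
      rw [frobNorm_le_iff, e2 Bstar, e2 B]
      exact h Bᵀ
  rw [hA, hB]
end
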